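/- For every i ≥ 5 (with τ_j = |T_j| = 2^{j-1}): T_{i-2} occurs in T_i exactly at positions 1, τ_{i-2}+τ_{i-3}+1, and τ_{i-1}+τ_{i-2}+1; and complement(T_{i-2}) occurs in T_i exactly at positions τ_{i-2}+1 and τ_{i-1}+1. -/
import Mathlib


/-- Thue-Morse words over the alphabet {a, b}, encoded with `false` = a, `true` = b:
`T 1 = a` and `T i = T (i-1) ++ complement (T (i-1))` for `i ≥ 2`, where the
complement swaps the two letters. -/
def tmw : ℕ → List Bool
  | 0 => []
  | 1 => [false]
  | n + 2 => tmw (n + 1) ++ (tmw (n + 1)).map (fun c => !c)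

/-- Complement: swap each a with b and vice versa. -/
def comp (S : List Bool) : List Bool := S.map (fun c => !c)

/-- `S` occurs in `T` at (1-based) position `p`. -/
def occursAt (S T : List Bool) (p : ℕ) : Prop :=
  1 ≤ p ∧ S <+: T.drop (p - 1)

/-- The Thue–Morse morphism. -/
def mu : List Bool → List Bool
  | [] => []
  | x :: l => x :: (!x) :: mu l

lemma mu_append (a b : List Bool) : mu (a ++ b) = mu a ++ mu b := by
  induction a with
  | nil => rfl
  | cons x l ih => simp [mu, ih]

lemma mu_comp (a : List Bool) : mu (comp a) = comp (mu a) := by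
  induction a with
  | nil => rfl
  | cons x l ih =>
    simp only [comp, List.map_cons] at *
    simp [mu, ih]

lemma mu_length (a : List Bool) : (mu a).length = 2 * a.length := by
  induction a with
  | nil => rfl
  | cons x l ih => simp [mu, ih]; ring

lemma comp_length (a : List Bool) : (comp a).length = a.length := by
  simp [comp]

lemma tmw_succ : ∀ n : ℕ, 1 ≤ n → tmw (n + 1) = mu (tmw n)
  | 0, h => by omega
  | 1, _ => by decide
  | (m + 2), _ => by
    have ih : tmw (m + 2) = mu (tmw (m + 1)) := tmw_succ (m + 1) (by omega)
    have hdef : tmw (m + 2 + 1) = tmw (m + 2) ++ comp (tmw (m + 2)) := rfl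
    rw [hdef, ih, ← mu_comp, ← mu_append]
    exact congrArg mu ((show tmw (m + 1) ++ comp (tmw (m + 1)) = tmw (m + 2) from rfl).trans ih)

lemma mu_drop (q : ℕ) (a : List Bool) : (mu a).drop (2 * q) = mu (a.drop q) := by
  induction q generalizing a with
  | zero => simp
  | succ n ih =>
    cases a with
    | nil => simp [mu]
    | cons x l =>
      rw [show 2 * (n + 1) = (2 * n) + 1 + 1 by ring]
      show (mu l).drop (2 * n) = mu (l.drop n)
      exact ih l

lemma mu_prefix {a b : List Bool} (h : a <+: b) : mu a <+: mu b := by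
  obtain ⟨t, rfl⟩ := h
  rw [mu_append]
  exact List.prefix_append _ _

lemma mu_prefix_rev : ∀ (a b : List Bool), mu a <+: mu b → a <+: b
  | [], _, _ => List.nil_prefix
  | x :: l, [], h => by
    have := h.length_le
    simp [mu, mu_length] at this
  | x :: l, y :: m, h => by
    rw [show mu (x :: l) = x :: (!x) :: mu l from rfl,
      show mu (y :: m) = y :: (!y) :: mu m from rfl] at h
    rw [List.cons_prefix_cons] at h
    obtain ⟨rfl, h⟩ := h
    rw [List.cons_prefix_cons] at h
    exact (List.cons_prefix_cons).2 ⟨rfl, mu_prefix_rev l m h.2⟩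

lemma odd_all_eq : ∀ (X R : List Bool) (c : Bool),
    (c :: mu X) <+: mu R → ∀ x ∈ X, x = !c
  | [], _, _, _ => by simp
  | x :: X', R, c, h => by
    cases R with
    | nil =>
      have := h.length_le
      simp [mu, mu_length] at this
    | cons r R' =>
      rw [show mu (x :: X') = x :: (!x) :: mu X' from rfl,
        show mu (r :: R') = r :: (!r) :: mu R' from rfl] at h
      rw [List.cons_prefix_cons] at h
      obtain ⟨h1, h⟩ := h
      rw [List.cons_prefix_cons] at h
      obtain ⟨h2, h⟩ := h
      have hx : x = !c := by rw [h2, ← h1]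
      have hrec := odd_all_eq X' R' (!x) h
      intro z hz
      rcases List.mem_cons.1 hz with rfl | hz'
      · exact hx
      · have := hrec z hz'
        rw [this, Bool.not_not, hx]

instance (S T : List Bool) (p : ℕ) : Decidable (occursAt S T p) := by
  unfold occursAt
  infer_instance

/-- Synchronization: `mu X` occurs in `mu Y` only at odd (1-based) positions,
and those occurrences come from occurrences of `X` in `Y`, provided `X` is not constant. -/
lemma sync (X Y : List Bool) (hX : ¬ ∃ c, ∀ x ∈ X, x = c) (p : ℕ) :
    occursAt (mu X) (mu Y) p ↔ ∃ q, p = 2 * q + 1 ∧ occursAt X Y (q + 1) := by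
  constructor
  · rintro ⟨hp, hpre⟩
    rcases Nat.even_or_odd (p - 1) with ⟨q, hq⟩ | ⟨q, hq⟩
    · have hq' : p - 1 = 2 * q := by omega
      rw [hq', mu_drop] at hpre
      exact ⟨q, by omega, by omega, mu_prefix_rev _ _ hpre⟩
    · exfalso
      have hq' : p - 1 = 2 * q + 1 := by omega
      rw [hq', show 2 * q + 1 = 2 * q + 1 from rfl] at hpre
      have hdrop : (mu Y).drop (2 * q + 1) = ((mu Y).drop (2 * q)).drop 1 := by
        rw [List.drop_drop]
      rw [hdrop, mu_drop] at hpre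
      cases hYd : Y.drop q with
      | nil =>
        rw [hYd] at hpre
        simp [mu] at hpre
        cases X with
        | nil => exact hX ⟨true, by simp⟩
        | cons x X' => simp [mu] at hpre
      | cons y R =>
        rw [hYd] at hpre
        rw [show mu (y :: R) = y :: (!y) :: mu R from rfl] at hpre
        simp only [List.drop_succ_cons, List.drop_zero] at hpre
        cases X with
        | nil => exact hX ⟨true, by simp⟩
        | cons x X' =>
          rw [show mu (x :: X') = x :: (!x) :: mu X' from rfl] at hpre
          rw [List.cons_prefix_cons] at hpre
          obtain ⟨rfl, hpre⟩ := hpre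
          have hall := odd_all_eq X' R (!(!y)) hpre
          refine hX ⟨!y, ?_⟩
          intro z hz
          rcases hz with _ | hz
          · rfl
          · rename_i hz'
            have := hall z hz'
            simpa using this
  · rintro ⟨q, rfl, h1, hpre⟩
    refine ⟨by omega, ?_⟩
    have : 2 * q + 1 - 1 = 2 * q := by omega
    rw [this, mu_drop]
    simp only [Nat.add_sub_cancel] at hpre
    exact mu_prefix hpre

lemma tmw_both (n : ℕ) (hn : 2 ≤ n) : false ∈ tmw n ∧ true ∈ tmw n := by
  induction n with
  | zero => omega
  | succ m ih =>
    rcases Nat.lt_or_ge m 2 with hm | hm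
    · interval_cases m
      · omega
      · decide
    · obtain ⟨h1, h2⟩ := ih hm
      have : m + 1 = (m - 1) + 2 := by omega
      rw [this]
      show _ ∈ tmw (m - 1 + 1) ++ _ ∧ _ ∈ tmw (m - 1 + 1) ++ _
      have hm1 : m - 1 + 1 = m := by omega
      rw [hm1]
      exact ⟨List.mem_append_left _ h1, List.mem_append_left _ h2⟩

lemma tmw_nonconst (n : ℕ) (hn : 2 ≤ n) : ¬ ∃ c, ∀ x ∈ tmw n, x = c := by
  obtain ⟨h1, h2⟩ := tmw_both n hn
  rintro ⟨c, hc⟩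
  have := hc _ h1
  have := hc _ h2
  simp_all

lemma comp_tmw_nonconst (n : ℕ) (hn : 2 ≤ n) : ¬ ∃ c, ∀ x ∈ comp (tmw n), x = c := by
  obtain ⟨h1, h2⟩ := tmw_both n hn
  rintro ⟨c, hc⟩
  have m1 : true ∈ comp (tmw n) := by simp [comp]; exact h1
  have m2 : false ∈ comp (tmw n) := by simp [comp]; exact h2
  have := hc _ m1
  have := hc _ m2
  simp_all

lemma occ_bound {S T : List Bool} {p : ℕ} (h : occursAt S T p) (hS : S ≠ []) :
    p ≤ T.length := by
  obtain ⟨h1, t, ht⟩ := h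
  have hlen := congrArg List.length ht
  simp only [List.length_drop, List.length_append] at hlen
  have : 1 ≤ S.length := by
    cases S
    · exact absurd rfl hS
    · simp
  omega

theorem tm_sub2_occurrences (i : ℕ) (hi : 5 ≤ i) :
    (∀ p, occursAt (tmw (i - 2)) (tmw i) p ↔
      p = 1 ∨ p = (tmw (i - 2)).length + (tmw (i - 3)).length + 1 ∨
        p = (tmw (i - 1)).length + (tmw (i - 2)).length + 1) ∧
    (∀ p, occursAt (comp (tmw (i - 2))) (tmw i) p ↔
      p = (tmw (i - 2)).length + 1 ∨ p = (tmw (i - 1)).length + 1) := by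
  induction i, hi using Nat.le_induction with
  | base =>
    have hlen5 : (tmw 5).length = 16 := by decide
    have hne3 : tmw (5 - 2) ≠ [] := by decide
    have hnec3 : comp (tmw (5 - 2)) ≠ [] := by decide
    constructor
    · intro p
      by_cases hp : p ≤ 16
      · interval_cases p <;> decide
      · constructor
        · intro h
          have := occ_bound h hne3
          omega
        · intro h
          have e1 : (tmw (5-2)).length = 4 := by decide
          have e2 : (tmw (5-3)).length = 2 := by decide
          have e3 : (tmw (5-1)).length = 8 := by decide
          omega
    · intro p
      by_cases hp : p ≤ 16
      · interval_cases p <;> decide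
      · constructor
        · intro h
          have := occ_bound h hnec3
          omega
        · intro h
          have e1 : (tmw (5-2)).length = 4 := by decide
          have e3 : (tmw (5-1)).length = 8 := by decide
          omega
  | succ i hi IH =>
    have h2 : i + 1 - 2 = i - 1 := by omega
    have h3 : i + 1 - 3 = i - 2 := by omega
    have h1 : i + 1 - 1 = i := by omega
    rw [h2, h3, h1]
    -- morphism facts
    have e1 : tmw (i - 1) = mu (tmw (i - 2)) := by
      have := tmw_succ (i - 2) (by omega)
      rwa [show i - 2 + 1 = i - 1 by omega] at this
    have e2 : tmw (i - 2) = mu (tmw (i - 3)) := by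
      have := tmw_succ (i - 3) (by omega)
      rwa [show i - 3 + 1 = i - 2 by omega] at this
    have e0 : tmw i = mu (tmw (i - 1)) := by
      have := tmw_succ (i - 1) (by omega)
      rwa [show i - 1 + 1 = i by omega] at this
    have etop : tmw (i + 1) = mu (tmw i) := tmw_succ i (by omega)
    -- length facts
    have hL1 : (tmw (i - 1)).length = 2 * (tmw (i - 2)).length := by
      rw [e1, mu_length]
    have hL2 : (tmw (i - 2)).length = 2 * (tmw (i - 3)).length := by
      rw [e2, mu_length]
    have hL0 : (tmw i).length = 2 * (tmw (i - 1)).length := by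
      rw [e0, mu_length]
    have nc : ¬ ∃ c, ∀ x ∈ tmw (i - 2), x = c := tmw_nonconst (i - 2) (by omega)
    have ncc : ¬ ∃ c, ∀ x ∈ comp (tmw (i - 2)), x = c :=
      comp_tmw_nonconst (i - 2) (by omega)
    constructor
    · intro p
      have key : occursAt (tmw (i - 1)) (tmw (i + 1)) p ↔
          ∃ q, p = 2 * q + 1 ∧ occursAt (tmw (i - 2)) (tmw i) (q + 1) := by
        rw [e1, etop]
        exact sync _ _ nc p
      rw [key]
      constructor
      · rintro ⟨q, rfl, hq⟩
        rw [IH.1] at hq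
        clear key nc ncc e0 e1 e2 etop IH hi
        omega
      · intro h
        rcases h with rfl | rfl | rfl
        · exact ⟨0, by omega, (IH.1 _).2 (by omega)⟩
        · exact ⟨(tmw (i - 2)).length + (tmw (i - 3)).length, by omega,
            (IH.1 _).2 (by omega)⟩
        · exact ⟨(tmw (i - 1)).length + (tmw (i - 2)).length, by omega,
            (IH.1 _).2 (by omega)⟩
    · intro p
      have key : occursAt (comp (tmw (i - 1))) (tmw (i + 1)) p ↔
          ∃ q, p = 2 * q + 1 ∧ occursAt (comp (tmw (i - 2))) (tmw i) (q + 1) := by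
        rw [e1, ← mu_comp, etop]
        exact sync _ _ ncc p
      rw [key]
      constructor
      · rintro ⟨q, rfl, hq⟩
        rw [IH.2] at hq
        clear key nc ncc e0 e1 e2 etop IH hi
        omega
      · intro h
        rcases h with rfl | rfl
        · exact ⟨(tmw (i - 2)).length, by omega, (IH.2 _).2 (by omega)⟩
        · exact ⟨(tmw (i - 1)).length, by omega, (IH.2 _).2 (by omega)⟩
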